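/- arXiv:2308.09600 — 4 statements merged into one kernel-verified Lean document; each statement's English description precedes it below -/
import Mathlib

section
/- Let R be a ring, t ∈ R, and suppose R is t-adically separated (i.e., ⋂_{n≥0} t^n R = 0). Let I and J be ideals of R, and for an ideal 𝔞 let 𝔞̄ denote its topological closure in the t-adic topology. Then Ī ∩ J̄ ⊆ √(closure of I ∩ J); that is, every element of Ī ∩ J̄ has its square in the t-adic closure of I ∩ J. -/
/-- The closure of an ideal `J` in the `t`-adic topology on `R`. -/
def adicClosure {R : Type*} [CommRing R] (t : R) (J : Ideal R) : Ideal R :=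
  ⨅ n : ℕ, J ⊔ Ideal.span {t ^ n}

/-- An ideal is `t`-adically closed if it equals its `t`-adic closure. -/
def IsAdicClosed {R : Type*} [CommRing R] (t : R) (J : Ideal R) : Prop :=
  adicClosure t J = J

theorem adicClosure_inter_subset_radical_closure_inf
    {R : Type*} [CommRing R] (t : R)
    (hsep : (⨅ n : ℕ, Ideal.span {t ^ n}) = ⊥) (I J : Ideal R) :
    adicClosure t I ⊓ adicClosure t J ≤ (adicClosure t (I ⊓ J)).radical ∧
    ∀ x : R, x ∈ adicClosure t I → x ∈ adicClosure t J →
      x ^ 2 ∈ adicClosure t (I ⊓ J) := by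
  have key : ∀ x : R, x ∈ adicClosure t I → x ∈ adicClosure t J →
      x ^ 2 ∈ adicClosure t (I ⊓ J) := by
    intro x hxI hxJ
    rw [adicClosure, Ideal.mem_iInf]
    intro n
    have hI : x ∈ I ⊔ Ideal.span {t ^ n} := Ideal.mem_iInf.mp hxI n
    have hJ : x ∈ J ⊔ Ideal.span {t ^ n} := Ideal.mem_iInf.mp hxJ n
    have hmul : (I ⊔ Ideal.span {t ^ n}) * (J ⊔ Ideal.span {t ^ n}) ≤
        (I ⊓ J) ⊔ Ideal.span {t ^ n} := by
      rw [Ideal.sup_mul, Ideal.mul_sup, Ideal.mul_sup]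
      refine sup_le (sup_le ?_ ?_) (sup_le ?_ ?_)
      · exact le_trans Ideal.mul_le_inf le_sup_left
      · exact le_trans Ideal.mul_le_right le_sup_right
      · exact le_trans Ideal.mul_le_left le_sup_right
      · exact le_trans Ideal.mul_le_left le_sup_right
    have := Ideal.mul_mem_mul hI hJ
    rw [pow_two]
    exact hmul this
  refine ⟨?_, key⟩
  intro x hx
  exact ⟨2, key x hx.1 hx.2⟩
end

section
/- Let R be a p-adically complete ring (classically complete and separated for the p-adic topology). Then the multiplicative monoid lim_{x ↦ x^p} R (the inverse limit of copies of R along the p-th power map) is isomorphic, as a multiplicative monoid, to the multiplicative monoid underlying the tilt R^♭ := lim_F R/pR, the inverse limit of R/pR along Frobenius. The isomorphism sends (x̄^(n))_n ∈ lim_F R/pR to (lim_{k→∞} (x^(n+k))^{p^k})_n, where x^(m) ∈ R is any lift of x̄^(m). -/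
/-- The multiplicative monoid `lim_{x ↦ x^p} R` of `p`-power-compatible sequences,
as a submonoid of `ℕ → R` with componentwise multiplication. -/
def tiltMonoid (p : ℕ) (R : Type*) [CommMonoid R] : Submonoid (ℕ → R) where
  carrier := {x | ∀ n, x (n + 1) ^ p = x n}
  one_mem' := fun n => one_pow p
  mul_mem' := by
    intro a b ha hb n
    simp only [Pi.mul_apply, mul_pow, ha n, hb n]

section Aux

variable {p : ℕ} {R : Type*} [CommRing R]

/-- Telescoping divisibility: if successive differences of `y` are divisible by increasing
powers of `p`, then `y m - y k` is divisible by `p ^ (k + 1)` for `k ≤ m`. -/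
private lemma telescope (y : ℕ → R)
    (h : ∀ k, (p : R) ^ (k + 1) ∣ y (k + 1) - y k) :
    ∀ k m, k ≤ m → (p : R) ^ (k + 1) ∣ y m - y k := by
  intro k m hkm
  induction m with
  | zero => simp_all
  | succ m ih =>
    rcases Nat.lt_or_ge k (m + 1) with hk | hk
    · have hkm' : k ≤ m := Nat.lt_succ_iff.mp hk
      have h1 : (p : R) ^ (k + 1) ∣ y (m + 1) - y m :=
        dvd_trans (pow_dvd_pow _ (by omega)) (h m)
      have h2 := ih hkm'
      have : y (m + 1) - y k = (y (m + 1) - y m) + (y m - y k) := by ring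
      rw [this]; exact dvd_add h1 h2
    · have : k = m + 1 := le_antisymm hkm hk
      subst this; simp

private lemma smodeq_iff_dvd (k : ℕ) (a b : R) :
    a ≡ b [SMOD ((Ideal.span {(p : R)}) ^ k • ⊤ : Submodule R R)] ↔ (p : R) ^ k ∣ a - b := by
  rw [SModEq.sub_mem, smul_eq_mul, Ideal.mul_top, Ideal.span_singleton_pow,
    Ideal.mem_span_singleton]

private lemma dvd_of_mk_eq {a b : R}
    (h : Ideal.Quotient.mk (Ideal.span {(p : R)}) a = Ideal.Quotient.mk (Ideal.span {(p : R)}) b) :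
    (p : R) ∣ a - b := by
  rwa [Ideal.Quotient.eq, Ideal.mem_span_singleton] at h

end Aux

theorem tilt_monoid_iso (p : ℕ) [Fact p.Prime] (R : Type*) [CommRing R]
    [CharP (R ⧸ Ideal.span {(p : R)}) p]
    (hcomplete : IsAdicComplete (Ideal.span {(p : R)}) R) :
    ∃ e : Perfection (R ⧸ Ideal.span {(p : R)}) p ≃* tiltMonoid p R,
      ∀ (x : Perfection (R ⧸ Ideal.span {(p : R)}) p) (n : ℕ),
        Ideal.Quotient.mk (Ideal.span {(p : R)}) ((e x : ℕ → R) n) =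
          Perfection.coeff (R ⧸ Ideal.span {(p : R)}) p n x := by
  classical
  set I : Ideal R := Ideal.span {(p : R)} with hI
  set Q := R ⧸ I
  set mk : R →+* Q := Ideal.Quotient.mk I with hmk
  -- a set-theoretic section of `mk`
  set lft : Q → R := Function.surjInv Ideal.Quotient.mk_surjective with hlft
  have hlift : ∀ a : Q, mk (lft a) = a := fun a =>
    Function.surjInv_eq Ideal.Quotient.mk_surjective a
  -- uniqueness from Hausdorff-ness
  have huniq : ∀ a b : R, (∀ k, (p : R) ^ k ∣ a - b) → a = b := by
    intro a b h
    have := hcomplete.toIsHausdorff.haus (a - b) (fun k => by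
      rw [SModEq.zero, smul_eq_mul, Ideal.mul_top, hI, Ideal.span_singleton_pow,
        Ideal.mem_span_singleton]
      exact h k)
    exact sub_eq_zero.mp this
  -- existence of limits
  have main : ∀ x : ℕ → Q, (∀ n, x (n + 1) ^ p = x n) →
      ∃ L : ℕ → R, ∀ n k, (p : R) ^ (k + 1) ∣ L n - lft (x (n + k)) ^ p ^ k := by
    intro x hx
    have key : ∀ n, ∃ L : R, ∀ k, (p : R) ^ (k + 1) ∣ L - lft (x (n + k)) ^ p ^ k := by
      intro n
      set f : ℕ → R := fun k => lft (x (n + k)) ^ p ^ k with hf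
      have hstep : ∀ k, (p : R) ^ (k + 1) ∣ f (k + 1) - f k := by
        intro k
        have h1 : mk (lft (x (n + (k + 1))) ^ p) = mk (lft (x (n + k))) := by
          rw [map_pow, hlift, hlift, ← Nat.add_assoc, hx (n + k)]
        have h2 := dvd_sub_pow_of_dvd_sub (dvd_of_mk_eq h1) k
        have h3 : (lft (x (n + (k + 1))) ^ p) ^ p ^ k = lft (x (n + (k + 1))) ^ p ^ (k + 1) := by
          rw [← pow_mul, pow_succ, mul_comm (p ^ k) p, pow_mul]
        rwa [h3] at h2
      have hcau : ∀ {a b : ℕ}, a ≤ b →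
          f a ≡ f b [SMOD (I ^ a • ⊤ : Submodule R R)] := by
        intro a b hab
        rw [hI, smodeq_iff_dvd]
        have := telescope f hstep a b hab
        exact (dvd_sub_comm.mp (dvd_trans (pow_dvd_pow _ (Nat.le_succ a)) this))
      obtain ⟨L, hL⟩ := hcomplete.toIsPrecomplete.prec' f hcau
      refine ⟨L, fun k => ?_⟩
      have h1 : (p : R) ^ (k + 1) ∣ L - f (k + 1) := by
        have := hL (k + 1)
        rw [hI, smodeq_iff_dvd] at this
        exact dvd_sub_comm.mp this
      have h2 := telescope f hstep k (k + 1) (Nat.le_succ k)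
      have : L - f k = (L - f (k + 1)) + (f (k + 1) - f k) := by ring
      rw [this]; exact dvd_add h1 h2
    choose L hL using key
    exact ⟨L, hL⟩
  -- the limit function on the perfection
  have main' : ∀ x : Perfection Q p,
      ∃ L : ℕ → R, ∀ n k, (p : R) ^ (k + 1) ∣ L n - lft (x.1 (n + k)) ^ p ^ k :=
    fun x => main x.1 x.2
  choose F hF using main'
  -- mk (F x n) = x n
  have hmkF : ∀ x n, mk (F x n) = x.1 n := by
    intro x n
    have := hF x n 0
    simp only [pow_one, pow_zero] at this
    obtain ⟨c, hc⟩ := this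
    have hmem : F x n - lft (x.1 (n + 0)) ∈ I := by
      show F x n - lft (x.1 (n + 0)) ∈ Ideal.span {(p : R)}
      rw [Ideal.mem_span_singleton, hc]
      exact Dvd.intro c (by ring)
    have heq := (Ideal.Quotient.eq (I := I)).mpr hmem
    show Ideal.Quotient.mk I (F x n) = x.1 n
    rw [heq]
    have := hlift (x.1 (n + 0))
    rw [hmk] at this
    rw [this, Nat.add_zero]
  -- F x is a compatible sequence
  have hFmem : ∀ x, F x ∈ tiltMonoid p R := by
    intro x n
    refine huniq _ _ fun k => ?_
    refine dvd_trans (pow_dvd_pow _ (Nat.le_succ k)) ?_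
    have h1 : (p : R) ^ (k + 1) ∣ F x (n + 1) ^ p - (lft (x.1 (n + 1 + k)) ^ p ^ k) ^ p := by
      rw [← geom_sum₂_mul]
      exact Dvd.dvd.mul_left (hF x (n + 1) k) _
    have h2 : (lft (x.1 (n + 1 + k)) ^ p ^ k) ^ p = lft (x.1 (n + (k + 1))) ^ p ^ (k + 1) := by
      rw [← pow_mul, ← pow_succ, show n + 1 + k = n + (k + 1) from by omega]
    have h3 : (p : R) ^ (k + 1) ∣ lft (x.1 (n + (k + 1))) ^ p ^ (k + 1) - F x n :=
      dvd_trans (pow_dvd_pow _ (Nat.le_succ (k + 1))) (dvd_sub_comm.mp (hF x n (k + 1)))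
    have : F x (n + 1) ^ p - F x n =
        (F x (n + 1) ^ p - (lft (x.1 (n + 1 + k)) ^ p ^ k) ^ p) +
          (lft (x.1 (n + (k + 1))) ^ p ^ (k + 1) - F x n) := by
      rw [← h2]; ring
    rw [this]; exact dvd_add h1 h3
  -- the monoid hom
  set φ : Perfection Q p →* tiltMonoid p R :=
    { toFun := fun x => ⟨F x, hFmem x⟩
      map_one' := by
        refine Subtype.ext (funext fun n => ?_)
        show F 1 n = 1
        refine huniq _ _ fun k => ?_
        refine dvd_trans (pow_dvd_pow _ (Nat.le_succ k)) ?_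
        have h1 := hF 1 n k
        have h2 : (p : R) ∣ lft ((1 : Perfection Q p).1 (n + k)) - 1 := by
          apply dvd_of_mk_eq
          rw [hlift, map_one]
          rfl
        have h3 := dvd_sub_pow_of_dvd_sub h2 k
        rw [one_pow] at h3
        have : F 1 n - 1 = (F 1 n - lft ((1 : Perfection Q p).1 (n + k)) ^ p ^ k) +
            (lft ((1 : Perfection Q p).1 (n + k)) ^ p ^ k - 1) := by ring
        rw [this]; exact dvd_add h1 h3
      map_mul' := by
        intro x y
        refine Subtype.ext (funext fun n => ?_)
        show F (x * y) n = F x n * F y n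
        refine huniq _ _ fun k => ?_
        refine dvd_trans (pow_dvd_pow _ (Nat.le_succ k)) ?_
        have hxy : (x * y).1 (n + k) = x.1 (n + k) * y.1 (n + k) := rfl
        have h1 := hF (x * y) n k
        have h2 : (p : R) ∣ lft ((x * y).1 (n + k)) - lft (x.1 (n + k)) * lft (y.1 (n + k)) := by
          apply dvd_of_mk_eq
          rw [map_mul, hlift, hlift, hlift, hxy]
        have h3 := dvd_sub_pow_of_dvd_sub h2 k
        rw [mul_pow] at h3
        have h4 : (p : R) ^ (k + 1) ∣
            lft (x.1 (n + k)) ^ p ^ k * lft (y.1 (n + k)) ^ p ^ k - F x n * F y n := by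
          have ha := dvd_sub_comm.mp (hF x n k)
          have hb := dvd_sub_comm.mp (hF y n k)
          have : lft (x.1 (n + k)) ^ p ^ k * lft (y.1 (n + k)) ^ p ^ k - F x n * F y n =
              (lft (x.1 (n + k)) ^ p ^ k - F x n) * lft (y.1 (n + k)) ^ p ^ k +
                F x n * (lft (y.1 (n + k)) ^ p ^ k - F y n) := by ring
          rw [this]
          exact dvd_add (ha.mul_right _) (hb.mul_left _)
        have : F (x * y) n - F x n * F y n =
            (F (x * y) n - lft ((x * y).1 (n + k)) ^ p ^ k) +
              (lft ((x * y).1 (n + k)) ^ p ^ k -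
                lft (x.1 (n + k)) ^ p ^ k * lft (y.1 (n + k)) ^ p ^ k) +
              (lft (x.1 (n + k)) ^ p ^ k * lft (y.1 (n + k)) ^ p ^ k - F x n * F y n) := by ring
        rw [this]
        exact dvd_add (dvd_add h1 h3) h4 } with hφ
  -- bijectivity
  have hinj : Function.Injective φ := by
    intro x y h
    have h' : ∀ n, F x n = F y n := fun n =>
      congrFun (congrArg Subtype.val h) n
    refine Perfection.ext fun n => ?_
    show x.1 n = y.1 n
    rw [← hmkF x n, ← hmkF y n, h' n]
  have hsurj : Function.Surjective φ := by
    rintro ⟨z, hz⟩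
    have hzpow : ∀ k n, z (n + k) ^ p ^ k = z n := by
      intro k
      induction k with
      | zero => intro n; simp
      | succ k ih =>
        intro n
        have : z (n + (k + 1)) ^ p ^ (k + 1) = (z (n + 1 + k) ^ p ^ k) ^ p := by
          rw [← pow_mul, ← pow_succ, show n + 1 + k = n + (k + 1) from by omega]
        rw [this, ih (n + 1), hz n]
    refine ⟨⟨fun n => mk (z n), fun n => by rw [← map_pow, hz n]⟩, ?_⟩
    refine Subtype.ext (funext fun n => ?_)
    show F _ n = z n
    refine huniq _ _ fun k => ?_
    refine dvd_trans (pow_dvd_pow _ (Nat.le_succ k)) ?_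
    have h1 := hF ⟨fun n => mk (z n), fun n => by rw [← map_pow, hz n]⟩ n k
    have h2 : (p : R) ∣ lft (mk (z (n + k))) - z (n + k) := by
      apply dvd_of_mk_eq
      rw [hlift]
    have h3 := dvd_sub_pow_of_dvd_sub h2 k
    rw [hzpow k n] at h3
    have : F ⟨fun n => mk (z n), fun n => by rw [← map_pow, hz n]⟩ n - z n =
        (F ⟨fun n => mk (z n), fun n => by rw [← map_pow, hz n]⟩ n -
          lft (mk (z (n + k))) ^ p ^ k) + (lft (mk (z (n + k))) ^ p ^ k - z n) := by ring
    rw [this]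
    exact dvd_add h1 h3
  refine ⟨MulEquiv.ofBijective φ ⟨hinj, hsurj⟩, fun x n => ?_⟩
  show mk (F x n) = _
  exact hmkF x n
end

section
/- Let R be a p-adically complete ring and let 𝔭 be a p-adically closed prime ideal of R. Then its tilt 𝔭^♭ = { x = (x^(n))_n ∈ R^♭ : x^(n) ∈ 𝔭 for all n } is a prime ideal of R^♭. -/
/-- Data exhibiting a ring `Rb` as the tilt `R^♭ ≅ lim_{x ↦ x^p} R` of a
`p`-adically complete ring `R`: the component maps `c x n = x^(n)` satisfy
`(x^(n+1))^p = x^(n)`, are multiplicative, additive modulo `p`, and identify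
elements of `Rb` with `p`-power-compatible sequences in `R`. -/
structure TiltData (p : ℕ) (R : Type*) [CommRing R] (Rb : Type*) [CommRing Rb] where
  c : Rb → ℕ → R
  pow_succ : ∀ x n, c x (n + 1) ^ p = c x n
  c_one : ∀ n, c 1 n = 1
  c_mul : ∀ x y n, c (x * y) n = c x n * c y n
  c_zero : ∀ n, c 0 n = 0
  c_add : ∀ x y n, c (x + y) n - (c x n + c y n) ∈ Ideal.span {(p : R)}
  surj : ∀ f : ℕ → R, (∀ n, f (n + 1) ^ p = f n) → ∃ x, c x = f
  inj : Function.Injective c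

theorem TiltData.c_pow {p : ℕ} {R Rb : Type*} [CommRing R] [CommRing Rb]
    (T : TiltData p R Rb) (x : Rb) (n k : ℕ) : T.c x (n + k) ^ p ^ k = T.c x n := by
  induction k with
  | zero => simp
  | succ k ih =>
    rw [pow_succ', pow_mul, ← Nat.add_assoc, T.pow_succ x (n + k), ih]

theorem tilt_of_closed_prime_is_prime
    {p : ℕ} [Fact p.Prime] {R Rb : Type*} [CommRing R] [CommRing Rb]
    (hR : IsAdicComplete (Ideal.span {(p : R)}) R) (T : TiltData p R Rb)
    (𝔭 : Ideal R) (hprime : 𝔭.IsPrime) (hclosed : IsAdicClosed (p : R) 𝔭) :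
    ∃ 𝔮 : Ideal Rb, 𝔮.IsPrime ∧ ∀ x : Rb, x ∈ 𝔮 ↔ ∀ n, T.c x n ∈ 𝔭 := by
  have ppos : 0 < p := (Fact.out : p.Prime).pos
  have key : ∀ x y : Rb, (∀ n, T.c x n ∈ 𝔭) → (∀ n, T.c y n ∈ 𝔭) →
      ∀ n, T.c (x + y) n ∈ 𝔭 := by
    intro x y hx hy n
    rw [← hclosed]
    rw [adicClosure, Ideal.mem_iInf]
    intro k
    have h1 : (p : R) ∣ T.c (x + y) (n + k) - (T.c x (n + k) + T.c y (n + k)) := by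
      rw [← Ideal.mem_span_singleton]; exact T.c_add x y (n + k)
    have h2 := dvd_sub_pow_of_dvd_sub h1 k
    rw [T.c_pow] at h2
    obtain ⟨r, hr⟩ := h2
    have heq : T.c (x + y) n =
        (T.c x (n + k) + T.c y (n + k)) ^ p ^ k + (p : R) ^ (k + 1) * r := by
      linear_combination hr
    rw [heq]
    refine Submodule.add_mem _ (Submodule.mem_sup_left ?_) (Submodule.mem_sup_right ?_)
    · exact Ideal.pow_mem_of_mem _ (Ideal.add_mem _ (hx _) (hy _)) _ (pow_pos ppos k)
    · rw [Ideal.mem_span_singleton, pow_succ']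
      exact Dvd.dvd.mul_right (dvd_mul_left _ _) r
  refine ⟨{ carrier := {x | ∀ n, T.c x n ∈ 𝔭},
            add_mem' := fun {x y} hx hy => key x y hx hy,
            zero_mem' := fun n => by rw [T.c_zero]; exact 𝔭.zero_mem,
            smul_mem' := fun r x hx n => by
              rw [smul_eq_mul, T.c_mul]; exact 𝔭.mul_mem_left _ (hx n) }, ?_, ?_⟩
  · constructor
    · intro h
      have h1 : (1 : Rb) ∈ (⊤ : Ideal Rb) := trivial
      rw [← h] at h1
      have := h1 0
      rw [T.c_one] at this
      exact hprime.ne_top (Ideal.eq_top_of_isUnit_mem _ this isUnit_one)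
    · intro x y hxy
      have hxy' : ∀ n, T.c x n * T.c y n ∈ 𝔭 := fun n => by
        rw [← T.c_mul]; exact hxy n
      rcases hprime.mem_or_mem (hxy' 0) with h | h
      · left; intro n
        have : T.c x n ^ p ^ n ∈ 𝔭 := by
          have := T.c_pow x 0 n; simp only [Nat.zero_add] at this; rw [this]; exact h
        exact hprime.mem_of_pow_mem _ this
      · right; intro n
        have : T.c y n ^ p ^ n ∈ 𝔭 := by
          have := T.c_pow y 0 n; simp only [Nat.zero_add] at this; rw [this]; exact h
        exact hprime.mem_of_pow_mem _ this
  · intro x; exact Iff.rfl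
end

section
/- Let R be a perfect ring of characteristic p and I a radical ideal of R. Then the set W(I) := { Σ_{n≥0} [x_n] p^n ∈ W(R) : x_n ∈ I for all n } (in Teichmüller coordinates) equals the kernel of the natural map W(R) → W(R/I) of p-typical Witt vector rings; in particular W(I) is an ideal of W(R). -/
open WittVector

section Aux

variable {p : ℕ} [hp : Fact p.Prime] {R : Type*} [CommRing R] [CharP R p]

private lemma aux_tp_coeff (a : R) (n : ℕ) :
    ∀ i, (teichmuller p a * (p : WittVector p R) ^ n).coeff i
      = if i = n then a ^ p ^ n else 0 := by
  induction n with
  | zero =>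
    intro i
    cases i with
    | zero => simp
    | succ i => simp
  | succ n ih =>
    intro i
    have hre : teichmuller p a * (p : WittVector p R) ^ (n + 1)
        = (teichmuller p a * (p : WittVector p R) ^ n) * p := by ring
    rw [hre]
    cases i with
    | zero => rw [mul_charP_coeff_zero]; simp
    | succ i =>
      rw [mul_charP_coeff_succ, ih i]
      by_cases h : i = n
      · subst h; simp [← pow_mul, pow_succ]
      · simp [h, zero_pow hp.out.ne_zero]

private lemma aux_sum_coeff (x : ℕ → R) (N : ℕ) :
    ∀ i, (∑ n ∈ Finset.range N,
        teichmuller p (x n) * (p : WittVector p R) ^ n).coeff i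
      = if i < N then x i ^ p ^ i else 0 := by
  induction N with
  | zero => simp
  | succ N ih =>
    intro i
    rw [Finset.sum_range_succ, coeff_add_of_disjoint]
    · rw [ih, aux_tp_coeff]
      rcases lt_trichotomy i N with h | h | h
      · have h1 : i ≠ N := h.ne
        have h2 : i < N + 1 := by omega
        simp [h, h1, h2]
      · subst h; simp
      · have h1 : ¬ i < N := by omega
        have h2 : i ≠ N := by omega
        have h3 : ¬ i < N + 1 := by omega
        simp [h1, h2, h3]
    · intro m
      rw [ih, aux_tp_coeff]
      by_cases h : m < N
      · right; simp [h.ne]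
      · left; simp [h]

private lemma aux_coeff_of_dvd {N : ℕ} {u : WittVector p R}
    (h : (p : WittVector p R) ^ N ∣ u) : ∀ i < N, u.coeff i = 0 := by
  induction N generalizing u with
  | zero => intro i hi; omega
  | succ N ih =>
    obtain ⟨c, rfl⟩ := h
    have key : (p : WittVector p R) ^ (N + 1) * c
        = ((p : WittVector p R) ^ N * c) * p := by ring
    intro i hi
    rw [key]
    cases i with
    | zero => rw [mul_charP_coeff_zero]
    | succ i =>
      rw [mul_charP_coeff_succ, ih ⟨c, rfl⟩ i (by omega), zero_pow hp.out.ne_zero]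

private lemma aux_dvd_of_coeff [PerfectRing R p] {N : ℕ} {u : WittVector p R}
    (h : ∀ i < N, u.coeff i = 0) : (p : WittVector p R) ^ N ∣ u := by
  induction N generalizing u with
  | zero => simp only [pow_zero]; exact one_dvd u
  | succ N ih =>
    set c : WittVector p R :=
      WittVector.mk p (fun n => (frobeniusEquiv R p).symm (u.coeff (n + 1))) with hc
    have hu : u = c * p := by
      rw [← verschiebung_frobenius]
      ext n
      cases n with
      | zero => rw [verschiebung_coeff_zero, h 0 N.succ_pos]
      | succ n =>
        rw [verschiebung_coeff_succ, coeff_frobenius_charP]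
        show u.coeff (n + 1) = ((frobeniusEquiv R p).symm (u.coeff (n + 1))) ^ p
        rw [frobeniusEquiv_symm_pow_p]
    have hcc : ∀ i < N, c.coeff i = 0 := by
      intro i hi
      show (frobeniusEquiv R p).symm (u.coeff (i + 1)) = 0
      rw [h (i + 1) (by omega), map_zero]
    rw [hu, pow_succ]
    exact mul_dvd_mul (ih hcc) dvd_rfl

end Aux

open WittVector in
/-- `W(I)`, the set of Witt vectors with Teichmüller expansion `Σ [x_n] p^n` with all
`x_n ∈ I`, equals the kernel of `W(R) → W(R/I)`. -/
theorem wittIdeal_eq_ker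
    {p : ℕ} [hp : Fact p.Prime] {R : Type*} [CommRing R] [CharP R p] [PerfectRing R p]
    (I : Ideal R) (hI : I.IsRadical) :
    ∀ w : WittVector p R,
      w ∈ RingHom.ker (WittVector.map (Ideal.Quotient.mk I) :
            WittVector p R →+* WittVector p (R ⧸ I)) ↔
      ∃ x : ℕ → R, (∀ n, x n ∈ I) ∧
        ∀ N : ℕ,
          w - ∑ n ∈ Finset.range N,
              WittVector.teichmuller p (x n) * (p : WittVector p R) ^ n
            ∈ Ideal.span {(p : WittVector p R) ^ N} := by
  intro w
  have hker : w ∈ RingHom.ker (WittVector.map (Ideal.Quotient.mk I) :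
      WittVector p R →+* WittVector p (R ⧸ I)) ↔ ∀ n, w.coeff n ∈ I := by
    rw [RingHom.mem_ker]
    constructor
    · intro h n
      have := congrArg (fun v => WittVector.coeff v n) h
      simp only [WittVector.map_coeff, WittVector.zero_coeff] at this
      exact (Ideal.Quotient.eq_zero_iff_mem).mp this
    · intro h
      ext n
      rw [WittVector.map_coeff, WittVector.zero_coeff,
        Ideal.Quotient.eq_zero_iff_mem]
      exact h n
  rw [hker]
  constructor
  · intro hw
    refine ⟨fun n => (iterateFrobeniusEquiv R p n).symm (w.coeff n), ?_, ?_⟩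
    · intro n
      refine hI ⟨p ^ n, ?_⟩
      have : ((iterateFrobeniusEquiv R p n).symm (w.coeff n)) ^ p ^ n = w.coeff n := by
        rw [← iterateFrobenius_def, ← coe_iterateFrobeniusEquiv,
          RingEquiv.apply_symm_apply]
      rw [this]
      exact hw n
    · intro N
      rw [Ideal.mem_span_singleton]
      apply aux_dvd_of_coeff
      intro i hi
      have hcoeff : (∑ n ∈ Finset.range N,
          teichmuller p ((iterateFrobeniusEquiv R p n).symm (w.coeff n))
            * (p : WittVector p R) ^ n).coeff i = w.coeff i := by
        rw [aux_sum_coeff, if_pos hi, ← iterateFrobenius_def,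
          ← coe_iterateFrobeniusEquiv, RingEquiv.apply_symm_apply]
      have htr : WittVector.truncate N
          (w - ∑ n ∈ Finset.range N,
            teichmuller p ((iterateFrobeniusEquiv R p n).symm (w.coeff n))
              * (p : WittVector p R) ^ n) = 0 := by
        rw [map_sub, sub_eq_zero]
        ext ⟨j, hj⟩
        rw [WittVector.coeff_truncate, WittVector.coeff_truncate]
        rw [aux_sum_coeff, if_pos hj, ← iterateFrobenius_def,
          ← coe_iterateFrobeniusEquiv, RingEquiv.apply_symm_apply]
      have := congrArg (fun v => TruncatedWittVector.coeff ⟨i, hi⟩ v) htr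
      simpa only [WittVector.coeff_truncate, TruncatedWittVector.coeff_zero] using this
  · rintro ⟨x, hxI, hx⟩ n
    set s := ∑ k ∈ Finset.range (n + 1),
        teichmuller p (x k) * (p : WittVector p R) ^ k with hs
    have hd : (p : WittVector p R) ^ (n + 1) ∣ w - s :=
      Ideal.mem_span_singleton.mp (hx (n + 1))
    have hw : w = s + (w - s) := by ring
    have hdis : ∀ m, s.coeff m = 0 ∨ (w - s).coeff m = 0 := by
      intro m
      by_cases h : m < n + 1
      · right; exact aux_coeff_of_dvd hd m h
      · left; rw [hs, aux_sum_coeff, if_neg h]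
    have hcoeff := coeff_add_of_disjoint n s (w - s) hdis
    rw [← hw] at hcoeff
    rw [hcoeff, aux_coeff_of_dvd hd n (by omega), add_zero, hs,
      aux_sum_coeff, if_pos (by omega : n < n + 1)]
    exact Ideal.pow_mem_of_mem I (hxI n) _ (Nat.pow_pos hp.out.pos)
end
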